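/- arXiv:1303.6151 — 4 statements merged into one kernel-verified Lean document; each statement's English description precedes it below -/
import Mathlib

section
/- Let α ∈ (0,1), A, B, D > 0, C > D, M ≥ 0, and let F : [1,∞) → [0,∞) be a differentiable nondecreasing function with |F'(x)| ≤ M for all x > 1. For n ∈ ℕ define w_n = Σ_{k≥n} e^{-k + A(k+B)^{1-α}} F((k+C)/D). If A(1-α)/(n+B)^α ≤ 1/4, then w_n ≤ 4 e^{-n + A(n+B)^{1-α}} F((n+C)/D) + (16M/D) e^{-n + A(n+B)^{1-α}}. -/
open Real Set

/-! Since `A (1-α) / (n+B)^α ≤ 1/4`, concavity of `x ↦ x^(1-α)` bounds the exponent of the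
`(n+k)`-th term by the exponent of the `n`-th term minus `3k/4`, while the derivative bound gives
`F((n+k+C)/D) ≤ F((n+C)/D) + (M/D) k`. The tail is thus dominated by
`e^{-n + A(n+B)^{1-α}} Σ_k (3/4)^k (F((n+C)/D) + (M/D) k)`, and `Σ (3/4)^k = 4`,
`Σ k (3/4)^k = 12`. -/

lemma rpow_add_le_rpow_add_mul {p y t : ℝ} (hp0 : 0 ≤ p) (hp1 : p ≤ 1) (hy : 0 < y)
    (ht : -y ≤ t) : (y + t) ^ p ≤ y ^ p + p * y ^ (p - 1) * t := by
  have hs : -1 ≤ t / y := by rw [le_div_iff₀ hy]; linarith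
  have hbernoulli := rpow_one_add_le_one_add_mul_self hs hp0 hp1
  calc (y + t) ^ p = (y * (1 + t / y)) ^ p := by rw [mul_add, mul_one, mul_div_cancel₀ _ hy.ne']
    _ = y ^ p * (1 + t / y) ^ p := mul_rpow hy.le (by linarith [hs])
    _ ≤ y ^ p * (1 + p * (t / y)) := by gcongr
    _ = y ^ p + p * y ^ (p - 1) * t := by
        rw [rpow_sub_one hy.ne']; field_simp

lemma mul_rpow_one_sub_add_le {α A y t : ℝ} (hα0 : 0 ≤ α) (hα1 : α ≤ 1) (hA : 0 ≤ A)
    (hy : 0 < y) (ht : 0 ≤ t) :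
    A * (y + t) ^ (1 - α) ≤ A * y ^ (1 - α) + A * (1 - α) / y ^ α * t := by
  have hconcave := rpow_add_le_rpow_add_mul (p := 1 - α) (by linarith) (by linarith) hy
    (by linarith : -y ≤ t)
  rw [sub_sub_cancel_left, rpow_neg hy.le] at hconcave
  calc A * (y + t) ^ (1 - α) ≤ A * (y ^ (1 - α) + (1 - α) * (y ^ α)⁻¹ * t) := by gcongr
    _ = A * y ^ (1 - α) + A * (1 - α) / y ^ α * t := by ring

lemma exp_neg_three_quarters_le : exp (-(3 / 4)) ≤ 3 / 4 := by
  rw [exp_neg, inv_le_comm₀ (exp_pos _) (by norm_num)]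
  linarith [add_one_le_exp (3 / 4 : ℝ)]

lemma exp_neg_add_mul_rpow_le_mul_pow {α A B x : ℝ} (hα0 : 0 ≤ α) (hα1 : α ≤ 1)
    (hA : 0 ≤ A) (hxB : 0 < x + B) (hslope : A * (1 - α) / (x + B) ^ α ≤ 1 / 4) (k : ℕ) :
    exp (-(x + k) + A * (x + k + B) ^ (1 - α))
      ≤ exp (-x + A * (x + B) ^ (1 - α)) * (3 / 4) ^ k := by
  have hconcave := mul_rpow_one_sub_add_le hα0 hα1 hA hxB k.cast_nonneg
  have hslope_k := mul_le_mul_of_nonneg_right hslope (k.cast_nonneg (α := ℝ))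
  calc exp (-(x + k) + A * (x + k + B) ^ (1 - α))
      ≤ exp (-x + A * (x + B) ^ (1 - α) + k * (-(3 / 4))) := by
        rw [exp_le_exp, add_right_comm x]; linarith
    _ = exp (-x + A * (x + B) ^ (1 - α)) * exp (-(3 / 4)) ^ k := by rw [exp_add, ← exp_nat_mul]
    _ ≤ exp (-x + A * (x + B) ^ (1 - α)) * (3 / 4) ^ k := by
        gcongr; exact exp_neg_three_quarters_le

lemma sub_le_mul_sub_of_hasDerivAt_le {f f' : ℝ → ℝ} {a M : ℝ}
    (hf : ∀ x > a, HasDerivAt f (f' x) x) (hf' : ∀ x > a, f' x ≤ M) {x y : ℝ}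
    (hx : a < x) (hxy : x ≤ y) : f y - f x ≤ M * (y - x) :=
  (convex_Ioi a).image_sub_le_mul_sub_of_deriv_le
    (fun z hz => (hf z hz).continuousAt.continuousWithinAt)
    (fun z hz => (hf z (interior_subset hz)).differentiableAt.differentiableWithinAt)
    (fun z hz => by
      rw [interior_Ioi] at hz
      rw [(hf z hz).deriv]
      exact hf' z hz)
    x hx y (hx.trans_le hxy) hxy

lemma hasSum_geometric_mul_affine {r : ℝ} (hr0 : 0 ≤ r) (hr1 : r < 1) (a b : ℝ) :
    HasSum (fun k : ℕ => r ^ k * (a + b * k)) (a * (1 - r)⁻¹ + b * (r / (1 - r) ^ 2)) := by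
  have hr : ‖r‖ < 1 := by rwa [norm_of_nonneg hr0]
  exact (((hasSum_geometric_of_lt_one hr0 hr1).mul_left a).add
    ((hasSum_coe_mul_geometric_of_norm_lt_one hr).mul_left b)).congr_fun fun k => by ring

theorem tail_sum_estimate_general
    (α A B C D M : ℝ) (hα : α ∈ Set.Ioo (0:ℝ) 1)
    (hA : 0 < A) (hB : 0 < B) (hD : 0 < D) (hCD : D < C) (hM : 0 ≤ M)
    (F F' : ℝ → ℝ)
    (hF0 : ∀ x ≥ (1:ℝ), 0 ≤ F x)
    (hderiv : ∀ x > (1:ℝ), HasDerivAt F (F' x) x)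
    (hF'bdd : ∀ x > (1:ℝ), |F' x| ≤ M)
    (n : ℕ) (hn : A * (1 - α) / (((n:ℝ) + B) ^ α) ≤ 1/4) :
    (∑' k : ℕ, Real.exp (-((n:ℝ) + k) + A * (((n:ℝ) + k + B) ^ (1 - α)))
        * F (((n:ℝ) + k + C) / D))
      ≤ 4 * Real.exp (-(n:ℝ) + A * (((n:ℝ) + B) ^ (1 - α))) * F (((n:ℝ) + C) / D)
        + (16 * M / D) * Real.exp (-(n:ℝ) + A * (((n:ℝ) + B) ^ (1 - α))) := by
  obtain ⟨hα0, hα1⟩ := hα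
  set E := exp (-(n:ℝ) + A * (((n:ℝ) + B) ^ (1 - α)))
  set F₀ := F (((n:ℝ) + C) / D)
  have harg : ∀ k : ℕ, 1 < ((n:ℝ) + k + C) / D := fun k => by
    rw [lt_div_iff₀ hD]; linarith [k.cast_nonneg (α := ℝ), n.cast_nonneg (α := ℝ)]
  have hF : ∀ k : ℕ, F (((n:ℝ) + k + C) / D) ≤ F₀ + M / D * k := fun k => by
    have hlip := sub_le_mul_sub_of_hasDerivAt_le (y := ((n:ℝ) + k + C) / D) hderiv
      (fun x hx => (abs_le.1 (hF'bdd x hx)).2) (by simpa using harg 0)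
      (by gcongr; exact le_add_of_nonneg_right k.cast_nonneg)
    have hstep : ((n:ℝ) + k + C) / D - ((n:ℝ) + C) / D = k / D := by ring
    rw [hstep, ← mul_div_assoc, mul_div_right_comm] at hlip
    linarith
  have hterm : ∀ k : ℕ, exp (-((n:ℝ) + k) + A * (((n:ℝ) + k + B) ^ (1 - α)))
      * F (((n:ℝ) + k + C) / D) ≤ E * ((3 / 4) ^ k * (F₀ + M / D * k)) := fun k => by
    rw [← mul_assoc]
    exact mul_le_mul (exp_neg_add_mul_rpow_le_mul_pow hα0.le hα1.le hA.le (by positivity) hn k)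
      (hF k) (hF0 _ (harg k).le) (by positivity)
  have hnonneg : ∀ k : ℕ, 0 ≤ exp (-((n:ℝ) + k) + A * (((n:ℝ) + k + B) ^ (1 - α)))
      * F (((n:ℝ) + k + C) / D) := fun k => mul_nonneg (exp_pos _).le (hF0 _ (harg k).le)
  have hdom := (hasSum_geometric_mul_affine (r := 3 / 4) (by norm_num) (by norm_num)
    F₀ (M / D)).mul_left E
  have hMD : 0 ≤ E * (M / D) := by positivity
  calc _ ≤ E * (F₀ * (1 - 3 / 4)⁻¹ + M / D * (3 / 4 / (1 - 3 / 4) ^ 2)) :=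
        hasSum_le hterm (hdom.summable.of_nonneg_of_le hnonneg hterm).hasSum hdom
    _ ≤ _ := by rw [mul_div_assoc]; norm_num; nlinarith

theorem tail_sum_estimate
    (α A B C D M : ℝ) (hα : α ∈ Set.Ioo (0:ℝ) 1)
    (hA : 0 < A) (hB : 0 < B) (hD : 0 < D) (hCD : D < C) (hM : 0 ≤ M)
    (F F' : ℝ → ℝ)
    (hF0 : ∀ x ≥ (1:ℝ), 0 ≤ F x)
    (hmono : MonotoneOn F (Set.Ici (1:ℝ)))
    (hderiv : ∀ x > (1:ℝ), HasDerivAt F (F' x) x)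
    (hF'bdd : ∀ x > (1:ℝ), |F' x| ≤ M)
    (n : ℕ) (hn : A * (1 - α) / (((n:ℝ) + B) ^ α) ≤ 1/4) :
    (∑' k : ℕ, Real.exp (-((n:ℝ) + k) + A * (((n:ℝ) + k + B) ^ (1 - α)))
        * F (((n:ℝ) + k + C) / D))
      ≤ 4 * Real.exp (-(n:ℝ) + A * (((n:ℝ) + B) ^ (1 - α))) * F (((n:ℝ) + C) / D)
        + (16 * M / D) * Real.exp (-(n:ℝ) + A * (((n:ℝ) + B) ^ (1 - α))) :=
  tail_sum_estimate_general α A B C D M hα hA hB hD hCD hM F F' hF0 hderiv hF'bdd n hn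
end

section
/- Let α ∈ (0,1), A, B > 0 and n ∈ ℕ with A(1-α)/((1-e^{-1})(n+B)^α) ≤ 1/2. Then Σ_{k≥n} e^{-k + A(k+B)^{1-α}} ≤ (2/(1-e^{-1})) e^{-n + A(n+B)^{1-α}}. -/
/-!
Write `x = n + B`. Concavity of `t ↦ t ^ (1 - α)` bounds `A (x + k) ^ (1 - α)` by its tangent line
`A x ^ (1 - α) + c k` with slope `c = A (1 - α) / x ^ α`, so the `k`-th term is at most the first term
times `r ^ k` with `r = exp (c - 1)`. The hypothesis on `n` says `c ≤ (1 - e⁻¹) / 2`, and convexity of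
`exp` on `[-1, 0]` then gives `1 - r ≥ (1 - c) (1 - e⁻¹) ≥ (1 - e⁻¹) / 2`, which bounds the geometric
series.
-/

open Real Set

theorem rpow_one_sub_add_le {α x t : ℝ} (hα0 : 0 ≤ α) (hα1 : α ≤ 1) (hx : 0 < x) (ht : 0 ≤ t) :
    (x + t) ^ (1 - α) ≤ x ^ (1 - α) + (1 - α) * t / x ^ α := by
  have hxα : 0 < x ^ α := rpow_pos_of_pos hx α
  have hfactor : (x + t) ^ (1 - α) = x ^ (1 - α) * (1 + t / x) ^ (1 - α) := by
    rw [← mul_rpow hx.le (by positivity)]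
    field_simp
  have hbernoulli : (1 + t / x) ^ (1 - α) ≤ 1 + (1 - α) * (t / x) :=
    rpow_one_add_le_one_add_mul_self (by linarith [div_nonneg ht hx.le]) (by linarith) (by linarith)
  have hsplit : x ^ (1 - α) * x ^ α = x := by
    rw [← rpow_add hx, sub_add_cancel, rpow_one]
  have hquot : x ^ (1 - α) / x = 1 / x ^ α := by
    rw [eq_div_iff hxα.ne', div_mul_eq_mul_div, hsplit, div_self hx.ne']
  calc (x + t) ^ (1 - α) ≤ x ^ (1 - α) * (1 + (1 - α) * (t / x)) := by
        rw [hfactor]; gcongr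
    _ = x ^ (1 - α) + (1 - α) * t * (x ^ (1 - α) / x) := by ring
    _ = x ^ (1 - α) + (1 - α) * t / x ^ α := by rw [hquot]; ring

theorem exp_sub_one_le_one_sub_mul {c : ℝ} (hc0 : 0 ≤ c) (hc1 : c ≤ 1) :
    exp (c - 1) ≤ 1 - (1 - c) * (1 - exp (-1)) := by
  have hconv := convexOn_exp.2 (mem_univ (-1)) (mem_univ 0) (sub_nonneg.2 hc1) hc0 (by ring)
  simp only [smul_eq_mul, mul_zero, add_zero, exp_zero, mul_one] at hconv
  calc exp (c - 1) = exp ((1 - c) * -1) := by ring_nf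
    _ ≤ (1 - c) * exp (-1) + c := hconv
    _ = 1 - (1 - c) * (1 - exp (-1)) := by ring

theorem tsum_le_div_one_sub_of_le_geometric {f : ℕ → ℝ} {a r : ℝ} (hf : ∀ k, 0 ≤ f k)
    (hfr : ∀ k, f k ≤ a * r ^ k) (hr0 : 0 ≤ r) (hr1 : r < 1) :
    ∑' k, f k ≤ a / (1 - r) := by
  have hgeom : Summable fun k ↦ a * r ^ k := (summable_geometric_of_lt_one hr0 hr1).mul_left a
  calc ∑' k, f k ≤ ∑' k, a * r ^ k := (hgeom.of_nonneg_of_le hf hfr).tsum_le_tsum hfr hgeom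
    _ = a / (1 - r) := by rw [tsum_mul_left, tsum_geometric_of_lt_one hr0 hr1, div_eq_mul_inv]

theorem exp_neg_add_mul_rpow_le_geometric {α A B m : ℝ} (hα0 : 0 ≤ α) (hα1 : α ≤ 1) (hA : 0 ≤ A)
    (hmB : 0 < m + B) (k : ℕ) :
    exp (-(m + k) + A * (m + k + B) ^ (1 - α)) ≤
      exp (-m + A * (m + B) ^ (1 - α)) * exp (A * (1 - α) / (m + B) ^ α - 1) ^ k := by
  have htangent := mul_le_mul_of_nonneg_left (rpow_one_sub_add_le hα0 hα1 hmB k.cast_nonneg) hA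
  rw [← exp_nat_mul, ← exp_add, exp_le_exp, add_right_comm m]
  linarith [show A * ((1 - α) * k / (m + B) ^ α) = A * (1 - α) / (m + B) ^ α * k by ring]

theorem tail_sum_estimate_geometric
    (α A B : ℝ) (hα : α ∈ Set.Ioo (0:ℝ) 1) (hA : 0 < A) (hB : 0 < B)
    (n : ℕ)
    (hn : A * (1 - α) / ((1 - Real.exp (-1)) * (((n:ℝ) + B) ^ α)) ≤ 1/2) :
    (∑' k : ℕ, Real.exp (-((n:ℝ) + k) + A * (((n:ℝ) + k + B) ^ (1 - α))))
      ≤ (2 / (1 - Real.exp (-1)))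
        * Real.exp (-(n:ℝ) + A * (((n:ℝ) + B) ^ (1 - α))) := by
  obtain ⟨hα0, hα1⟩ := hα
  have hx : 0 < (n : ℝ) + B := by positivity
  set c := A * (1 - α) / ((n : ℝ) + B) ^ α
  have hD : 0 < 1 - exp (-1) := sub_pos.2 (exp_lt_one_iff.2 neg_one_lt_zero)
  have hc0 : 0 ≤ c := by have := sub_pos.2 hα1; positivity
  have hcD : 2 * c ≤ 1 - exp (-1) := by
    rw [div_mul_eq_div_div_swap, div_le_iff₀ hD] at hn
    linarith
  have hc1 : 2 * c ≤ 1 := by linarith [exp_pos (-1)]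
  have hr1 : exp (c - 1) < 1 := exp_lt_one_iff.2 (by linarith)
  have hratio : 1 / (1 - exp (c - 1)) ≤ 2 / (1 - exp (-1)) := by
    rw [div_le_div_iff₀ (sub_pos.2 hr1) hD]
    nlinarith [exp_sub_one_le_one_sub_mul hc0 (by linarith), mul_nonneg hD.le (sub_nonneg.2 hc1)]
  calc _ ≤ exp (-n + A * (n + B) ^ (1 - α)) / (1 - exp (c - 1)) :=
        tsum_le_div_one_sub_of_le_geometric (fun _ ↦ (exp_pos _).le)
          (exp_neg_add_mul_rpow_le_geometric hα0.le hα1.le hA.le hx) (exp_pos _).le hr1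
    _ = 1 / (1 - exp (c - 1)) * exp (-n + A * (n + B) ^ (1 - α)) := by ring
    _ ≤ _ := by gcongr
end

section
/- Let α ∈ (0,1] and let F ∈ 𝒜 (in particular F(1+x) ≤ Cx for x ∈ [0,1] and F has bounded derivative). Suppose f ∈ Lᵅmo_F(ℝ²), and fix x ∈ ℝ², r ∈ (0,1/2), k ≥ 1. Setting φ(s) = avg_{B(x,s)} f, one has |φ(r) − φ(2^{-k} r)| ≤ C‖f‖ Σ_{ℓ=0}^{k-1} F((1+ℓ+|ln r|)/(ℓ+|ln r|)) ≤ C'‖f‖ Σ_{ℓ=0}^{k-1} 1/(ℓ+|ln r|) ≤ C''‖f‖ ln((k+|ln r|)/|ln r|), where ‖f‖ = ‖f‖_{Lᵅmo_F}. -/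
open Real Set MeasureTheory Metric

theorem LamoF_concentric_telescoping
    (α : ℝ) (hα : α ∈ Set.Ioc (0:ℝ) 1)
    (F : ℝ → ℝ) (CF : ℝ) (hCF : 0 < CF)
    (hFmono : MonotoneOn F (Set.Ici (1:ℝ)))
    (hF0 : ∀ x ≥ (1:ℝ), 0 ≤ F x)
    (hFcancel : ∀ t ∈ Set.Icc (0:ℝ) 1, F (1 + t) ≤ CF * t) :
    ∃ C > (0:ℝ), ∃ C' > (0:ℝ), ∃ C'' > (0:ℝ),
      ∀ (f : EuclideanSpace ℝ (Fin 2) → ℝ), LocallyIntegrable f volume →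
      ∀ N : ℝ,
      (∀ (c : EuclideanSpace ℝ (Fin 2)) (r : ℝ), 0 < r → r ≤ 1/2 →
        |Real.log r| ^ α *
          ⨍ y in ball c r, |f y - ⨍ z in ball c r, f z| ≤ N) →
      (∀ (c₁ c₂ : EuclideanSpace ℝ (Fin 2)) (r₁ r₂ : ℝ), 0 < r₁ → r₁ ≤ 1/2 →
        0 < r₂ → ball c₂ (2 * r₂) ⊆ ball c₁ r₁ →
        |(⨍ y in ball c₂ r₂, f y) - ⨍ y in ball c₁ r₁, f y|
          ≤ N * F (|Real.log r₂| / |Real.log r₁|)) →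
      ∀ (x : EuclideanSpace ℝ (Fin 2)) (r : ℝ), 0 < r → r < 1/2 →
      ∀ k : ℕ, 1 ≤ k →
        |(⨍ y in ball x r, f y) - ⨍ y in ball x ((2:ℝ) ^ (-(k:ℝ)) * r), f y|
            ≤ C * N * ∑ l ∈ Finset.range k,
                F ((1 + l + |Real.log r|) / (l + |Real.log r|)) ∧
          C * N * ∑ l ∈ Finset.range k,
              F ((1 + l + |Real.log r|) / (l + |Real.log r|))
            ≤ C' * N * ∑ l ∈ Finset.range k, 1 / (l + |Real.log r|) ∧
          C' * N * ∑ l ∈ Finset.range k, 1 / (l + |Real.log r|)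
            ≤ C'' * N * Real.log ((k + |Real.log r|) / |Real.log r|) := by
  have hc : 0 < Real.log 2 := Real.log_pos (by norm_num)
  have hc1 : Real.log 2 ≤ 1 := by
    have := Real.log_le_sub_one_of_pos (show (0:ℝ) < 2 by norm_num)
    linarith
  set C' : ℝ := max CF (F (1 + 1 / Real.log 2)) with hC'def
  have hC'pos : 0 < C' := lt_max_of_lt_left hCF
  have hc2pos : (0:ℝ) < 1 + 1 / Real.log 2 := by positivity
  refine ⟨1, one_pos, C', hC'pos, C' * (1 + 1 / Real.log 2), by positivity, ?_⟩
  intro f hf N h1 h2 x r hr hr2 k hk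
  -- N is nonnegative
  have hN : 0 ≤ N := by
    refine le_trans ?_ (h1 x (1/2) (by norm_num) le_rfl)
    refine mul_nonneg (by positivity) ?_
    rw [MeasureTheory.setAverage_eq]
    exact smul_nonneg (by positivity) (MeasureTheory.integral_nonneg fun y => abs_nonneg _)
  set L := |Real.log r| with hLdef
  have hlogr : Real.log r < 0 := Real.log_neg hr (by linarith)
  have hLeq : L = -Real.log r := abs_of_neg hlogr
  have hLge : Real.log 2 ≤ L := by
    have h12 : Real.log r < Real.log (1/2) := Real.log_lt_log hr hr2
    have : Real.log (1/2 : ℝ) = -Real.log 2 := by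
      rw [one_div, Real.log_inv]
    rw [hLeq]; linarith
  have hLpos : 0 < L := lt_of_lt_of_le hc hLge
  -- log of scaled radii
  have habs : ∀ l : ℕ, |Real.log ((2:ℝ) ^ (-(l:ℝ)) * r)| = l * Real.log 2 + L := by
    intro l
    have hlog : Real.log ((2:ℝ) ^ (-(l:ℝ)) * r) = -((l:ℝ) * Real.log 2) + Real.log r := by
      rw [Real.log_mul (by positivity) (ne_of_gt hr), Real.log_rpow (by norm_num)]
      ring
    have hneg : Real.log ((2:ℝ) ^ (-(l:ℝ)) * r) < 0 := by
      rw [hlog]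
      have : (0:ℝ) ≤ (l:ℝ) * Real.log 2 := by positivity
      linarith
    rw [abs_of_neg hneg, hlog, hLeq]; ring
  set g : ℕ → ℝ := fun l => ⨍ y in ball x ((2:ℝ) ^ (-(l:ℝ)) * r), f y with hgdef
  have hlL : ∀ l : ℕ, (0:ℝ) < (l:ℝ) + L := fun l => by positivity
  -- single step estimate
  have hstep : ∀ l : ℕ, |g (l + 1) - g l| ≤ N * F ((1 + (l:ℝ) + L) / ((l:ℝ) + L)) := by
    intro l
    have hr1pos : 0 < (2:ℝ) ^ (-(l:ℝ)) * r := by positivity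
    have hr2pos : 0 < (2:ℝ) ^ (-((l+1:ℕ):ℝ)) * r := by positivity
    have h2pow : (2:ℝ) ^ (-(l:ℝ)) = 2 * (2:ℝ) ^ (-(((l:ℝ)) + 1)) := by
      rw [show -(l:ℝ) = 1 + -((l:ℝ) + 1) by ring, Real.rpow_add (by norm_num), Real.rpow_one]
    have hr1le : (2:ℝ) ^ (-(l:ℝ)) * r ≤ 1/2 := by
      have h1' : (2:ℝ) ^ (-(l:ℝ)) ≤ 1 :=
        Real.rpow_le_one_of_one_le_of_nonpos (by norm_num) (neg_nonpos.2 (Nat.cast_nonneg l))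
      nlinarith
    have hsub : ball x (2 * ((2:ℝ) ^ (-((l+1:ℕ):ℝ)) * r)) ⊆ ball x ((2:ℝ) ^ (-(l:ℝ)) * r) := by
      have : 2 * ((2:ℝ) ^ (-((l+1:ℕ):ℝ)) * r) = (2:ℝ) ^ (-(l:ℝ)) * r := by
        push_cast
        rw [h2pow]; ring
      rw [this]
    have hb := h2 x x ((2:ℝ) ^ (-(l:ℝ)) * r) ((2:ℝ) ^ (-((l+1:ℕ):ℝ)) * r)
      hr1pos hr1le hr2pos hsub
    have hab1 := habs l
    have hab2 := habs (l + 1)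
    rw [hab1, hab2] at hb
    refine le_trans hb ?_
    push_cast
    refine mul_le_mul_of_nonneg_left ?_ hN
    have hden : (0:ℝ) < (l:ℝ) * Real.log 2 + L := by positivity
    apply hFmono
    · have : (l:ℝ) * Real.log 2 + L ≤ ((l:ℝ) + 1) * Real.log 2 + L := by nlinarith
      exact mem_Ici.2 ((one_le_div hden).2 this)
    · have : (l:ℝ) + L ≤ 1 + (l:ℝ) + L := by linarith
      exact mem_Ici.2 ((one_le_div (hlL l)).2 this)
    · rw [div_le_div_iff₀ hden (hlL l)]
      nlinarith [(Nat.cast_nonneg l : (0:ℝ) ≤ (l:ℝ))]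
  -- telescoping
  constructor
  · have hg0 : (⨍ y in ball x r, f y) = g 0 := by
      simp only [hgdef]
      norm_num
    have htel : (⨍ y in ball x r, f y) - g k = ∑ l ∈ Finset.range k, (g l - g (l + 1)) := by
      rw [Finset.sum_range_sub' g k, hg0]
    calc |(⨍ y in ball x r, f y) - g k|
        = |∑ l ∈ Finset.range k, (g l - g (l + 1))| := by rw [htel]
      _ ≤ ∑ l ∈ Finset.range k, |g l - g (l + 1)| := Finset.abs_sum_le_sum_abs _ _
      _ ≤ ∑ l ∈ Finset.range k, N * F ((1 + (l:ℝ) + L) / ((l:ℝ) + L)) := by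
          refine Finset.sum_le_sum fun l _ => ?_
          rw [abs_sub_comm]; exact hstep l
      _ = 1 * N * ∑ l ∈ Finset.range k, F ((1 + (l:ℝ) + L) / ((l:ℝ) + L)) := by
          rw [one_mul, Finset.mul_sum]
  constructor
  · -- sum of F ≤ C' * harmonic sum
    have hterm : ∀ l : ℕ, F ((1 + (l:ℝ) + L) / ((l:ℝ) + L)) ≤ C' * (1 / ((l:ℝ) + L)) := by
      intro l
      have hd := hlL l
      have hrw : (1 + (l:ℝ) + L) / ((l:ℝ) + L) = 1 + 1 / ((l:ℝ) + L) := by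
        field_simp
        ring
      set t : ℝ := 1 / ((l:ℝ) + L) with htdef
      have ht : 0 < t := by positivity
      rw [hrw]
      by_cases hcase : t ≤ 1
      · calc F (1 + t) ≤ CF * t := hFcancel t ⟨le_of_lt ht, hcase⟩
          _ ≤ C' * t := mul_le_mul_of_nonneg_right (le_max_left _ _) (le_of_lt ht)
      · push_neg at hcase
        have htle : t ≤ 1 / Real.log 2 := by
          rw [htdef]
          apply one_div_le_one_div_of_le hc
          have : (0:ℝ) ≤ (l:ℝ) := Nat.cast_nonneg l
          linarith
        calc F (1 + t) ≤ F (1 + 1 / Real.log 2) := by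
              apply hFmono (mem_Ici.2 (by linarith))
                (mem_Ici.2 (le_add_of_nonneg_right (by positivity)))
              linarith
          _ ≤ C' := le_max_right _ _
          _ ≤ C' * t := le_mul_of_one_le_right (le_of_lt hC'pos) (le_of_lt hcase)
    calc 1 * N * ∑ l ∈ Finset.range k, F ((1 + (l:ℝ) + L) / ((l:ℝ) + L))
        = N * ∑ l ∈ Finset.range k, F ((1 + (l:ℝ) + L) / ((l:ℝ) + L)) := by rw [one_mul]
      _ ≤ N * ∑ l ∈ Finset.range k, C' * (1 / ((l:ℝ) + L)) := by
          refine mul_le_mul_of_nonneg_left (Finset.sum_le_sum fun l _ => hterm l) hN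
      _ = C' * N * ∑ l ∈ Finset.range k, 1 / ((l:ℝ) + L) := by
          rw [← Finset.mul_sum]; ring
  · -- harmonic sum ≤ log
    have hkL : (0:ℝ) < (k:ℝ) + L := by positivity
    have hterm : ∀ l : ℕ, 1 / ((l:ℝ) + L) ≤
        (1 + 1 / Real.log 2) * (Real.log (((l:ℝ) + 1) + L) - Real.log ((l:ℝ) + L)) := by
      intro l
      have hd := hlL l
      have hd1 : (0:ℝ) < (l:ℝ) + 1 + L := by linarith
      have hkey : 1 / ((l:ℝ) + L + 1) ≤ Real.log ((l:ℝ) + 1 + L) - Real.log ((l:ℝ) + L) := by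
        have h := Real.log_le_sub_one_of_pos
          (show (0:ℝ) < ((l:ℝ) + L) / ((l:ℝ) + 1 + L) by positivity)
        rw [Real.log_div (ne_of_gt hd) (ne_of_gt hd1)] at h
        have : ((l:ℝ) + L) / ((l:ℝ) + 1 + L) - 1 = -(1 / ((l:ℝ) + L + 1)) := by
          field_simp; ring
        rw [this] at h
        linarith
      have hcmp : 1 / ((l:ℝ) + L) ≤ (1 + 1 / Real.log 2) * (1 / ((l:ℝ) + L + 1)) := by
        rw [mul_one_div, div_le_div_iff₀ hd (by linarith : (0:ℝ) < (l:ℝ) + L + 1), one_mul]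
        have hl0 : (0:ℝ) ≤ (l:ℝ) := Nat.cast_nonneg l
        have hA : (1:ℝ) ≤ ((l:ℝ) + L) / Real.log 2 := by
          rw [le_div_iff₀ hc]; linarith
        have hfrac : (1 + 1 / Real.log 2) * ((l:ℝ) + L) =
            ((l:ℝ) + L) + ((l:ℝ) + L) / Real.log 2 := by ring
        linarith
      calc 1 / ((l:ℝ) + L) ≤ (1 + 1 / Real.log 2) * (1 / ((l:ℝ) + L + 1)) := hcmp
        _ ≤ (1 + 1 / Real.log 2) * (Real.log ((l:ℝ) + 1 + L) - Real.log ((l:ℝ) + L)) := by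
            apply mul_le_mul_of_nonneg_left _ (le_of_lt hc2pos)
            exact hkey
    have hsum : ∑ l ∈ Finset.range k, 1 / ((l:ℝ) + L) ≤
        (1 + 1 / Real.log 2) * Real.log (((k:ℝ) + L) / L) := by
      calc ∑ l ∈ Finset.range k, 1 / ((l:ℝ) + L)
          ≤ ∑ l ∈ Finset.range k,
              (1 + 1 / Real.log 2) * (Real.log (((l:ℝ) + 1) + L) - Real.log ((l:ℝ) + L)) :=
            Finset.sum_le_sum fun l _ => hterm l
        _ = (1 + 1 / Real.log 2) *
              ∑ l ∈ Finset.range k, (Real.log (((l:ℝ) + 1) + L) - Real.log ((l:ℝ) + L)) := by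
            rw [Finset.mul_sum]
        _ = (1 + 1 / Real.log 2) * (Real.log ((k:ℝ) + L) - Real.log ((0:ℕ) + L)) := by
            rw [show (∑ l ∈ Finset.range k,
                (Real.log (((l:ℝ) + 1) + L) - Real.log ((l:ℝ) + L))) =
                ∑ l ∈ Finset.range k,
                  ((fun n : ℕ => Real.log ((n:ℝ) + L)) (l + 1) -
                   (fun n : ℕ => Real.log ((n:ℝ) + L)) l) from
              Finset.sum_congr rfl fun l _ => by push_cast; ring_nf,
              Finset.sum_range_sub (fun n : ℕ => Real.log ((n:ℝ) + L)) k]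
        _ = (1 + 1 / Real.log 2) * Real.log (((k:ℝ) + L) / L) := by
            rw [Real.log_div (ne_of_gt hkL) (ne_of_gt hLpos)]
            norm_num
    calc C' * N * ∑ l ∈ Finset.range k, 1 / ((l:ℝ) + L)
        ≤ C' * N * ((1 + 1 / Real.log 2) * Real.log (((k:ℝ) + L) / L)) :=
          mul_le_mul_of_nonneg_left hsum (by positivity)
      _ = C' * (1 + 1 / Real.log 2) * N * Real.log (((k:ℝ) + L) / L) := by ring
end

section
/- (Osgood lemma) Let a, A > 0 with A ≥ a, let Γ : [a,∞) → ℝ₊ be continuous nondecreasing and positive, γ : [t₀,T] → ℝ₊ locally integrable, and ρ : [t₀,T] → [a,∞) measurable with ρ(t) ≤ A + ∫_{t₀}^t γ(τ) Γ(ρ(τ)) ρ(τ) dτ for all t. Define ℳ(y) = ∫_a^y dx/(x Γ(x)) and assume ℳ(y) → ∞ as y → ∞. Then for all t ∈ [t₀,T], ρ(t) ≤ ℳ^{-1}(ℳ(A) + ∫_{t₀}^t γ(τ) dτ). -/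
open Real Set MeasureTheory

theorem osgood_lemma
    (a A t₀ T : ℝ) (ha : 0 < a) (hA : a ≤ A) (hA0 : 0 < A) (ht : t₀ ≤ T)
    (Γ γ ρ : ℝ → ℝ)
    (hΓcont : ContinuousOn Γ (Set.Ici a))
    (hΓmono : MonotoneOn Γ (Set.Ici a))
    (hΓpos : ∀ x ≥ a, 0 < Γ x)
    (hγpos : ∀ t ∈ Set.Icc t₀ T, 0 ≤ γ t)
    (hγint : IntervalIntegrable γ volume t₀ T)
    (hρmeas : Measurable ρ)
    (hρrange : ∀ t ∈ Set.Icc t₀ T, a ≤ ρ t)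
    (hint : ∀ t ∈ Set.Icc t₀ T,
      IntervalIntegrable (fun τ => γ τ * Γ (ρ τ) * ρ τ) volume t₀ t)
    (hineq : ∀ t ∈ Set.Icc t₀ T,
      ρ t ≤ A + ∫ τ in t₀..t, γ τ * Γ (ρ τ) * ρ τ)
    (M : ℝ → ℝ) (hM : ∀ y, M y = ∫ x in a..y, (x * Γ x)⁻¹)
    (hMdiv : Filter.Tendsto M Filter.atTop Filter.atTop) :
    ∀ t ∈ Set.Icc t₀ T, M (ρ t) ≤ M A + ∫ τ in t₀..t, γ τ := by
  set f : ℝ → ℝ := fun τ => γ τ * Γ (ρ τ) * ρ τ with hfdef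
  set R : ℝ → ℝ := fun t => A + ∫ τ in t₀..t, f τ with hRdef
  set g : ℝ → ℝ := fun x => (x * Γ x)⁻¹ with hgdef
  clear_value f R g
  -- positivity of x * Γ x
  have hxpos : ∀ x, a ≤ x → 0 < x * Γ x := fun x hx =>
    mul_pos (ha.trans_le hx) (hΓpos x hx)
  have hxmono : ∀ x y, a ≤ x → x ≤ y → x * Γ x ≤ y * Γ y := by
    intro x y hx hxy
    exact mul_le_mul hxy (hΓmono hx (hx.trans hxy) hxy) (hΓpos x hx).le
      (ha.le.trans (hx.trans hxy))
  -- integrability of f on subintervals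
  have hfT : IntervalIntegrable f volume t₀ T := hint T ⟨ht, le_rfl⟩
  have hfst : ∀ s t, s ∈ Set.Icc t₀ T → t ∈ Set.Icc t₀ T →
      IntervalIntegrable f volume s t := by
    intro s t hs ht'
    refine hfT.mono_set ?_
    rw [uIcc_of_le ht]
    exact uIcc_subset_Icc hs ht'
  have hγst : ∀ s t, s ∈ Set.Icc t₀ T → t ∈ Set.Icc t₀ T →
      IntervalIntegrable γ volume s t := by
    intro s t hs ht'
    refine hγint.mono_set ?_
    rw [uIcc_of_le ht]
    exact uIcc_subset_Icc hs ht'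
  have hfpos : ∀ τ ∈ Set.Icc t₀ T, 0 ≤ f τ := by
    intro τ hτ
    rw [hfdef]
    exact mul_nonneg (mul_nonneg (hγpos τ hτ) (hΓpos _ (hρrange τ hτ)).le)
      (ha.le.trans (hρrange τ hτ))
  -- R t - R s = ∫ s..t f
  have hRsub : ∀ s t, s ∈ Set.Icc t₀ T → t ∈ Set.Icc t₀ T →
      R t - R s = ∫ τ in s..t, f τ := by
    intro s t hs ht'
    have h := intervalIntegral.integral_add_adjacent_intervals (hint s hs) (hfst s t hs ht')
    simp only [hRdef]
    linarith
  have hRt₀ : R t₀ = A := by simp [hRdef]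
  have hRmono : ∀ s t, s ∈ Set.Icc t₀ T → t ∈ Set.Icc t₀ T → s ≤ t → R s ≤ R t := by
    intro s t hs ht' hst
    have h0 : (0:ℝ) ≤ ∫ τ in s..t, f τ := by
      apply intervalIntegral.integral_nonneg hst
      intro u hu
      exact hfpos u ⟨hs.1.trans hu.1, hu.2.trans ht'.2⟩
    have := hRsub s t hs ht'
    linarith
  have hRA : ∀ t ∈ Set.Icc t₀ T, A ≤ R t := by
    intro t ht'
    have := hRmono t₀ t ⟨le_rfl, ht⟩ ht' ht'.1
    linarith [hRt₀]
  have hRa : ∀ t ∈ Set.Icc t₀ T, a ≤ R t := fun t ht' => hA.trans (hRA t ht')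
  have hρR : ∀ t ∈ Set.Icc t₀ T, ρ t ≤ R t := by
    intro t ht'
    rw [hRdef]
    exact hineq t ht'
  -- continuity of R
  have hRcont : ContinuousOn R (Set.Icc t₀ T) := by
    rw [hRdef]
    apply continuousOn_const.add
    have := intervalIntegral.continuousOn_primitive_interval'
      (μ := volume) (f := f) (b₁ := t₀) (b₂ := T) hfT (by rw [uIcc_of_le ht]; exact ⟨le_rfl, ht⟩)
    rwa [uIcc_of_le ht] at this
  -- g facts
  have hgcont : ContinuousOn g (Set.Ici a) := by
    rw [hgdef]
    apply ContinuousOn.inv₀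
    · exact (continuousOn_id.mul hΓcont)
    · intro x hx; exact (hxpos x hx).ne'
  have hgpos : ∀ x, a ≤ x → 0 ≤ g x := by
    intro x hx
    rw [hgdef]
    exact (inv_pos.2 (hxpos x hx)).le
  have hganti : ∀ x y, a ≤ x → x ≤ y → g y ≤ g x := by
    intro x y hx hxy
    rw [hgdef]
    exact inv_anti₀ (hxpos x hx) (hxmono x y hx hxy)
  have hgint : ∀ y z, a ≤ y → y ≤ z → IntervalIntegrable g volume y z := by
    intro y z hy hyz
    apply ContinuousOn.intervalIntegrable
    apply hgcont.mono
    rw [uIcc_of_le hyz]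
    exact fun u hu => hy.trans hu.1
  -- M difference formula
  have hMsub : ∀ y z, a ≤ y → y ≤ z → M z - M y = ∫ x in y..z, g x := by
    intro y z hy hyz
    rw [hM z, hM y]
    have h := intervalIntegral.integral_add_adjacent_intervals
      (hgint a y le_rfl hy) (hgint y z hy hyz)
    simp only [hgdef] at h ⊢
    linarith
  have hMmono : ∀ y z, a ≤ y → y ≤ z → M y ≤ M z := by
    intro y z hy hyz
    have h0 : (0:ℝ) ≤ ∫ x in y..z, g x := by
      apply intervalIntegral.integral_nonneg hyz
      intro u hu
      exact hgpos u (hy.trans hu.1)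
    linarith [hMsub y z hy hyz]
  have hMle : ∀ y z, a ≤ y → y ≤ z → M z - M y ≤ g y * (z - y) := by
    intro y z hy hyz
    rw [hMsub y z hy hyz]
    calc (∫ x in y..z, g x) ≤ ∫ _x in y..z, g y := by
          apply intervalIntegral.integral_mono_on hyz (hgint y z hy hyz)
            intervalIntegrable_const
          intro x hx
          exact hganti y x hy hx.1
      _ = g y * (z - y) := by
          rw [intervalIntegral.integral_const, smul_eq_mul, mul_comm]
  -- continuity of M on [a, R T]
  have hRTmem : T ∈ Set.Icc t₀ T := ⟨ht, le_rfl⟩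
  have haRT : a ≤ R T := hRa T hRTmem
  have hMcont : ContinuousOn M (Set.Icc a (R T)) := by
    have h1 : ContinuousOn (fun y => ∫ x in a..y, g x) (Set.Icc a (R T)) := by
      have := intervalIntegral.continuousOn_primitive_interval'
        (μ := volume) (f := g) (b₁ := a) (b₂ := R T) (hgint a (R T) le_rfl haRT)
        (by rw [uIcc_of_le haRT]; exact ⟨le_rfl, haRT⟩)
      rwa [uIcc_of_le haRT] at this
    exact h1.congr fun y _ => hM y
  have hRmaps : ∀ t ∈ Set.Icc t₀ T, R t ∈ Set.Icc a (R T) :=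
    fun t ht' => ⟨hRa t ht', hRmono t T ht' hRTmem ht'.2⟩
  have hMRcont : ContinuousOn (fun t => M (R t)) (Set.Icc t₀ T) :=
    hMcont.comp hRcont hRmaps
  have hGcont : ContinuousOn (fun t => ∫ τ in t₀..t, γ τ) (Set.Icc t₀ T) := by
    have := intervalIntegral.continuousOn_primitive_interval'
      (μ := volume) (f := γ) (b₁ := t₀) (b₂ := T) hγint
      (by rw [uIcc_of_le ht]; exact ⟨le_rfl, ht⟩)
    rwa [uIcc_of_le ht] at this
  have hGnonneg : ∀ t ∈ Set.Icc t₀ T, (0:ℝ) ≤ ∫ τ in t₀..t, γ τ := by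
    intro t ht'
    apply intervalIntegral.integral_nonneg ht'.1
    intro u hu
    exact hγpos u ⟨hu.1, hu.2.trans ht'.2⟩
  -- main claim for each ε > 0
  have main : ∀ ε : ℝ, 0 < ε → ∀ t ∈ Set.Icc t₀ T,
      M (R t) ≤ M A + (1 + ε) * ∫ τ in t₀..t, γ τ := by
    intro ε hε
    suffices h : Set.Icc t₀ T ⊆ {t | M (R t) ≤ M A + (1 + ε) * ∫ τ in t₀..t, γ τ} by
      exact fun t ht' => h ht'
    have hφ : ContinuousOn (fun t => M A + (1 + ε) * (∫ τ in t₀..t, γ τ) - M (R t))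
        (Set.Icc t₀ T) := (continuousOn_const.add (continuousOn_const.mul hGcont)).sub hMRcont
    apply IsClosed.Icc_subset_of_forall_exists_gt
    · -- closedness
      have hc : IsClosed (Set.Icc t₀ T ∩
          (fun t => M A + (1 + ε) * (∫ τ in t₀..t, γ τ) - M (R t)) ⁻¹' (Set.Ici 0)) :=
        hφ.preimage_isClosed_of_isClosed isClosed_Icc isClosed_Ici
      have heq : {t | M (R t) ≤ M A + (1 + ε) * ∫ τ in t₀..t, γ τ} ∩ Set.Icc t₀ T
          = Set.Icc t₀ T ∩
          (fun t => M A + (1 + ε) * (∫ τ in t₀..t, γ τ) - M (R t)) ⁻¹' (Set.Ici 0) := by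
        ext u
        simp only [Set.mem_inter_iff, Set.mem_preimage, Set.mem_Ici, Set.mem_setOf_eq]
        constructor
        · rintro ⟨h1, h2⟩; exact ⟨h2, by linarith⟩
        · rintro ⟨h1, h2⟩; exact ⟨by linarith, h1⟩
      rw [heq]; exact hc
    · -- t₀ ∈ S
      simp only [Set.mem_setOf_eq, hRt₀, intervalIntegral.integral_same, mul_zero]
      linarith
    · -- induction step
      rintro x ⟨hxS, hxIco⟩ y hy
      have hxIcc : x ∈ Set.Icc t₀ T := ⟨hxIco.1, hxIco.2.le⟩
      set m := min y T with hmdef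
      clear_value m
      have hxm : x < m := by rw [hmdef]; exact lt_min hy hxIco.2
      have hmT : m ≤ T := by rw [hmdef]; exact min_le_right y T
      have hmy : m ≤ y := by rw [hmdef]; exact min_le_left y T
      have hmIcc : m ∈ Set.Icc t₀ T := ⟨hxIcc.1.trans hxm.le, hmT⟩
      set c := R x * Γ (R x) with hcdef
      clear_value c
      have hc : 0 < c := by rw [hcdef]; exact hxpos (R x) (hRa x hxIcc)
      -- ψ = fun t => R t * Γ (R t) is continuous within Icc
      have hψcont : ContinuousOn (fun t => R t * Γ (R t)) (Set.Icc t₀ T) :=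
        hRcont.mul (hΓcont.comp hRcont fun t ht' => hRa t ht')
      have hmemIoc : Set.Ioc x m ⊆ Set.Icc t₀ T := fun u hu =>
        ⟨hxIcc.1.trans hu.1.le, hu.2.trans hmT⟩
      have hcwa : ContinuousWithinAt (fun t => R t * Γ (R t)) (Set.Ioc x m) x :=
        ((hψcont x hxIcc).mono hmemIoc)
      have hev : ∀ᶠ t in nhdsWithin x (Set.Ioc x m),
          R t * Γ (R t) < (1 + ε) * c := by
        apply hcwa.eventually_lt_const
        simp only [hcdef] at hc ⊢
        nlinarith
      have hNe : (nhdsWithin x (Set.Ioc x m)).NeBot := by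
        rw [← mem_closure_iff_nhdsWithin_neBot, closure_Ioc hxm.ne]
        exact ⟨le_rfl, hxm.le⟩
      obtain ⟨t, htψ, htmem⟩ := (hev.and (eventually_mem_nhdsWithin)).exists
      have htIcc : t ∈ Set.Icc t₀ T := hmemIoc htmem
      have hxt : x ≤ t := htmem.1.le
      refine ⟨t, ?_, htmem.1, htmem.2.trans hmy⟩
      -- show t ∈ S
      have hRxRt : R x ≤ R t := hRmono x t hxIcc htIcc hxt
      have hM1 : M (R t) - M (R x) ≤ g (R x) * (R t - R x) :=
        hMle (R x) (R t) (hRa x hxIcc) hRxRt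
      -- bound R t - R x
      have hI : (0:ℝ) ≤ ∫ τ in x..t, γ τ := by
        apply intervalIntegral.integral_nonneg hxt
        intro u hu
        exact hγpos u ⟨hxIcc.1.trans hu.1, hu.2.trans htIcc.2⟩
      have hRtx : R t - R x ≤ (∫ τ in x..t, γ τ) * (R t * Γ (R t)) := by
        rw [hRsub x t hxIcc htIcc]
        calc (∫ τ in x..t, f τ) ≤ ∫ τ in x..t, γ τ * (R t * Γ (R t)) := by
              apply intervalIntegral.integral_mono_on hxt (hfst x t hxIcc htIcc)
                ((hγst x t hxIcc htIcc).mul_const _)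
              intro τ hτ
              have hτIcc : τ ∈ Set.Icc t₀ T := ⟨hxIcc.1.trans hτ.1, hτ.2.trans htIcc.2⟩
              have h1 : Γ (ρ τ) * ρ τ ≤ Γ (R τ) * R τ :=
                mul_le_mul (hΓmono (hρrange τ hτIcc) (hRa τ hτIcc) (hρR τ hτIcc))
                  (hρR τ hτIcc) (ha.le.trans (hρrange τ hτIcc))
                  (hΓpos _ (hRa τ hτIcc)).le
              have h2 : R τ * Γ (R τ) ≤ R t * Γ (R t) :=
                hxmono (R τ) (R t) (hRa τ hτIcc) (hRmono τ t hτIcc htIcc hτ.2)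
              have h3 : 0 ≤ γ τ := hγpos τ hτIcc
              calc f τ = γ τ * (Γ (ρ τ) * ρ τ) := by simp only [hfdef]; ring
                _ ≤ γ τ * (R t * Γ (R t)) := by
                    apply mul_le_mul_of_nonneg_left _ h3
                    nlinarith
          _ = (∫ τ in x..t, γ τ) * (R t * Γ (R t)) :=
              intervalIntegral.integral_mul_const _ _
      -- combine
      have hgRx : g (R x) = c⁻¹ := by simp only [hgdef, hcdef]
      have hkey : M (R t) ≤ M (R x) + (1 + ε) * ∫ τ in x..t, γ τ := by
        have h4 : g (R x) * (R t - R x) ≤ c⁻¹ * ((∫ τ in x..t, γ τ) * (R t * Γ (R t))) := by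
          rw [hgRx]
          apply mul_le_mul_of_nonneg_left hRtx (inv_pos.2 hc).le
        have hinv : c⁻¹ * c = 1 := inv_mul_cancel₀ hc.ne'
        have hψle : R t * Γ (R t) ≤ (1 + ε) * c := htψ.le
        have hcinv : (0:ℝ) ≤ c⁻¹ := (inv_pos.2 hc).le
        have h6 : c⁻¹ * ((∫ τ in x..t, γ τ) * ((1 + ε) * c)) =
            (1 + ε) * ∫ τ in x..t, γ τ := by
          calc c⁻¹ * ((∫ τ in x..t, γ τ) * ((1 + ε) * c))
              = (1 + ε) * (∫ τ in x..t, γ τ) * (c⁻¹ * c) := by ring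
            _ = (1 + ε) * ∫ τ in x..t, γ τ := by rw [hinv, mul_one]
        have h5 : c⁻¹ * ((∫ τ in x..t, γ τ) * (R t * Γ (R t))) ≤
            (1 + ε) * ∫ τ in x..t, γ τ := by
          rw [← h6]
          exact mul_le_mul_of_nonneg_left (mul_le_mul_of_nonneg_left hψle hI) hcinv
        linarith
      have hadj : (∫ τ in t₀..x, γ τ) + (∫ τ in x..t, γ τ) = ∫ τ in t₀..t, γ τ :=
        intervalIntegral.integral_add_adjacent_intervals
          (hγst t₀ x ⟨le_rfl, ht⟩ hxIcc) (hγst x t hxIcc htIcc)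
      have hxS' : M (R x) ≤ M A + (1 + ε) * ∫ τ in t₀..x, γ τ := hxS
      simp only [Set.mem_setOf_eq]
      have : (1 + ε) * (∫ τ in t₀..x, γ τ) + (1 + ε) * (∫ τ in x..t, γ τ)
          = (1 + ε) * ∫ τ in t₀..t, γ τ := by rw [← mul_add, hadj]
      linarith
  -- conclude
  intro t ht'
  have hMρR : M (ρ t) ≤ M (R t) := hMmono (ρ t) (R t) (hρrange t ht') (hρR t ht')
  have hG : (0:ℝ) ≤ ∫ τ in t₀..t, γ τ := hGnonneg t ht'
  have hfinal : ∀ δ : ℝ, 0 < δ →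
      M (ρ t) ≤ M A + (∫ τ in t₀..t, γ τ) + δ := by
    intro δ hδ
    set G := ∫ τ in t₀..t, γ τ with hGdef
    clear_value G
    have hq : 0 < δ / (G + 1) := div_pos hδ (by linarith)
    have h := main (δ / (G + 1)) hq t ht'
    have h2 : δ / (G + 1) * (G + 1) = δ := div_mul_cancel₀ δ (by linarith)
    nlinarith
  by_contra hcon
  push_neg at hcon
  have := hfinal ((M (ρ t) - (M A + ∫ τ in t₀..t, γ τ)) / 2) (by linarith)
  linarith
end
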